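/- For the 3×3 matrix A = [[−α, α, 0], [1, −1, 1], [0, −β, 0]] with α = 9 and β = 100/7, all eigenvalues of B = A + νI have negative real part whenever ν < 0.0639. -/
import Mathlib


private lemma stmt_15_key (u y : ℝ) (hu : u > -(639/10000))
    (hre : u^3 - 3*u*y^2 + 10*(u^2 - y^2) + (100/7)*u + 900/7 = 0)
    (him : y*(3*u^2 - y^2 + 20*u + 100/7) = 0) : False := by
  rcases mul_eq_zero.mp him with h0 | hq
  · subst h0
    nlinarith [sq_nonneg u, sq_nonneg (u+1), hu]
  · have hq2 : 14*u^3 + 140*u^2 + 400*u + 25 = 0 := by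
      linear_combination (7/4)*(3*u+10)*hq - (7/4)*hre
    nlinarith [hu, sq_nonneg (u+5), mul_nonneg (by linarith : (0:ℝ) ≤ u + 639/10000) (sq_nonneg (u+5))]

/-- For the Chua matrix `A = [[-α, α, 0], [1, -1, 1], [0, -β, 0]]` with `α = 9` and
`β = 100/7`, all (complex) eigenvalues of `B = A + ν I` have negative real part
whenever `ν < 0.0639`. -/
theorem stmt_15 (ν : ℝ) (hν : ν < 0.0639) :
    ∀ lam ∈ spectrum ℂ
      (((Matrix.of ![![-(9:ℝ), 9, 0], ![1, -1, 1], ![0, -(100/7), 0]]) +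
          ν • (1 : Matrix (Fin 3) (Fin 3) ℝ)).map (algebraMap ℝ ℂ)),
      lam.re < 0 := by
  intro lam hlam
  rw [spectrum.mem_iff, Matrix.isUnit_iff_isUnit_det, isUnit_iff_ne_zero, not_not] at hlam
  have h : (lam • (1:Matrix (Fin 3) (Fin 3) ℂ) -
      ((Matrix.of ![![-(9:ℝ), 9, 0], ![1, -1, 1], ![0, -(100/7), 0]]) +
          ν • (1 : Matrix (Fin 3) (Fin 3) ℝ)).map (algebraMap ℝ ℂ)).det = 0 := by
    simpa [Algebra.algebraMap_eq_smul_one] using hlam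
  rw [Matrix.det_fin_three] at h
  simp [Matrix.map_apply, Matrix.smul_apply, Matrix.one_apply, Matrix.add_apply] at h
  ring_nf at h
  have hz : (lam - (ν:ℂ))^3 + 10*(lam - ν)^2 + (100/7)*(lam - ν) + 900/7 = 0 := by
    linear_combination h
  by_contra h0
  push_neg at h0
  set u : ℝ := lam.re - ν with hu
  set y : ℝ := lam.im with hy
  have hzu : lam - (ν:ℂ) = Complex.I * y + u := by
    simp [Complex.ext_iff, hu, hy]
  rw [hzu] at hz
  have hre := congrArg Complex.re hz
  have him := congrArg Complex.im hz
  simp [pow_succ, Complex.add_re, Complex.add_im, Complex.mul_re, Complex.mul_im] at hre him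
  refine stmt_15_key u y (by norm_num at hν ⊢; linarith) (by linear_combination hre)
    (by linear_combination him)
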